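/- For every u₁ ∈ {0,1} and every pair x ≠ x' in {0,1}×{0,1}, the Bhattacharyya parameter of the glued split channel satisfies Z_{x,x'}(W^{(2,3)}_{u₁}) := Σ_{y∈Y⁴} √(W^{(2,3)}_{u₁}(x)(y)·W^{(2,3)}_{u₁}(x')(y)) ≥ (1/2)·Z(W)^{D_{x,x'}(u₁)}. -/

import Mathlib

/-!
The Bhattacharyya coefficient `∑ y, √(P y · Q y)` is multiplicative over memoryless products,
and for a single use of `W` it equals `1` on equal inputs and `Z(W)` on distinct ones; hence the
codewords `a, b` realising the partial distance give `Z(W) ^ d_H(a, b)`. Since the coefficient is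
monotone in both arguments and each half-mixture defining the split channel dominates half of the
output law of one of its codewords, the factor `1/2` is all that is lost.
-/

open Finset

noncomputable def bhattacharyyaCoeff {Y : Type*} [Fintype Y] (P Q : Y → ℝ) : ℝ :=
  ∑ y, √(P y * Q y)

namespace bhattacharyyaCoeff

variable {Y : Type*} [Fintype Y]

theorem comm (P Q : Y → ℝ) : bhattacharyyaCoeff P Q = bhattacharyyaCoeff Q P := by
  simp only [bhattacharyyaCoeff, mul_comm]

theorem self {P : Y → ℝ} (hP : ∀ y, 0 ≤ P y) : bhattacharyyaCoeff P P = ∑ y, P y :=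
  sum_congr rfl fun y _ => Real.sqrt_mul_self (hP y)

theorem const_mul {c : ℝ} (hc : 0 ≤ c) (P Q : Y → ℝ) :
    bhattacharyyaCoeff (fun y => c * P y) (fun y => c * Q y) = c * bhattacharyyaCoeff P Q := by
  simp only [bhattacharyyaCoeff, mul_sum]
  refine sum_congr rfl fun y _ => ?_
  rw [mul_mul_mul_comm, Real.sqrt_mul (mul_self_nonneg c), Real.sqrt_mul_self hc]

theorem mono {P P' Q Q' : Y → ℝ} (hP : ∀ y, 0 ≤ P y) (hQ : ∀ y, 0 ≤ Q y)
    (hPP' : ∀ y, P y ≤ P' y) (hQQ' : ∀ y, Q y ≤ Q' y) :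
    bhattacharyyaCoeff P Q ≤ bhattacharyyaCoeff P' Q' :=
  sum_le_sum fun y _ =>
    Real.sqrt_le_sqrt (mul_le_mul (hPP' y) (hQQ' y) (hQ y) ((hP y).trans (hPP' y)))

theorem pi {ι : Type*} [Fintype ι] [DecidableEq ι] {P Q : ι → Y → ℝ}
    (hP : ∀ i y, 0 ≤ P i y) (hQ : ∀ i y, 0 ≤ Q i y) :
    bhattacharyyaCoeff (fun y : ι → Y => ∏ i, P i (y i)) (fun y => ∏ i, Q i (y i)) =
      ∏ i, bhattacharyyaCoeff (P i) (Q i) := by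
  simp only [bhattacharyyaCoeff, Fintype.prod_sum, ← prod_mul_distrib]
  exact sum_congr rfl fun y _ =>
    Real.sqrt_prod _ fun i _ => mul_nonneg (hP i (y i)) (hQ i (y i))

variable {W : Bool → Y → ℝ}

theorem binary_eq_ite (hW : ∀ b y, 0 ≤ W b y) (hWsum : ∀ b, ∑ y, W b y = 1) (a b : Bool) :
    bhattacharyyaCoeff (W a) (W b) =
      if a ≠ b then bhattacharyyaCoeff (W false) (W true) else 1 := by
  cases a <;> cases b
  all_goals simp only [ne_eq, not_true_eq_false, if_false, Bool.false_eq_true, Bool.true_eq_false,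
    not_false_eq_true, if_true, self (hW _), hWsum]
  exact comm _ _

theorem binary_pi_eq_pow (hW : ∀ b y, 0 ≤ W b y) (hWsum : ∀ b, ∑ y, W b y = 1)
    {ι : Type*} [Fintype ι] [DecidableEq ι] (a b : ι → Bool) :
    bhattacharyyaCoeff (fun y : ι → Y => ∏ i, W (a i) (y i)) (fun y => ∏ i, W (b i) (y i)) =
      bhattacharyyaCoeff (W false) (W true) ^ hammingDist a b := by
  rw [pi (fun i => hW (a i)) (fun i => hW (b i)),
    prod_congr rfl fun i _ => binary_eq_ite hW hWsum (a i) (b i), ← prod_filter, prod_const]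
  rfl

end bhattacharyyaCoeff

theorem glued_split_channel_bhattacharyya_lower_general
    {Y : Type*} [Fintype Y]
    (W : Bool → Y → ℝ) (hWnn : ∀ b y, 0 ≤ W b y)
    (hWsum : ∀ b, ∑ y, W b y = 1)
    (g : Bool → Bool × Bool → Bool → (Fin 4 → Bool)) :
    ∀ (u₁ : Bool) (x x' : Bool × Bool), x ≠ x' →
      ((1 : ℝ) / 2) * (∑ y, Real.sqrt (W false y * W true y)) ^
            (Finset.univ.inf' Finset.univ_nonempty
              (fun p : Bool × Bool => hammingDist (g u₁ x p.1) (g u₁ x' p.2)))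
        ≤ ∑ y : Fin 4 → Y,
            Real.sqrt ((((1 : ℝ) / 2) * ∑ u₄ : Bool, ∏ i, W (g u₁ x u₄ i) (y i)) *
              (((1 : ℝ) / 2) * ∑ v₄ : Bool, ∏ i, W (g u₁ x' v₄ i) (y i))) := by
  intro u₁ x x' _
  obtain ⟨p, -, hp⟩ := exists_mem_eq_inf' univ_nonempty
    (fun p : Bool × Bool => hammingDist (g u₁ x p.1) (g u₁ x' p.2))
  have hW4 (c : Fin 4 → Bool) (y : Fin 4 → Y) : 0 ≤ ∏ i, W (c i) (y i) :=
    prod_nonneg fun i _ => hWnn _ _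
  rw [hp]
  change 1 / 2 * bhattacharyyaCoeff (W false) (W true) ^ _ ≤
    bhattacharyyaCoeff (fun y => 1 / 2 * _) (fun y => 1 / 2 * _)
  rw [← bhattacharyyaCoeff.binary_pi_eq_pow hWnn hWsum,
    ← bhattacharyyaCoeff.const_mul one_half_pos.le]
  refine bhattacharyyaCoeff.mono (fun y => mul_nonneg one_half_pos.le (hW4 _ y))
    (fun y => mul_nonneg one_half_pos.le (hW4 _ y)) (fun y => ?_) (fun y => ?_) <;>
  exact mul_le_mul_of_nonneg_left
    (single_le_sum (f := fun u => ∏ i, W (g u₁ _ u i) (y i)) (fun u _ => hW4 _ y) (mem_univ _))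
    one_half_pos.le

/-- **Lower bound on the Bhattacharyya parameter of the glued split channel**
(from the proof of Proposition 3).  For a binary-input DMC `W` with Bhattacharyya parameter
`Z(W) = ∑ y, √(W 0 y · W 1 y)`, an arbitrary kernel map `g`, and the glued split channel
`W^{(2,3)}_{u₁}(x)(y) = (1/2) ∑_{u₄} W⁴(g(u₁,x,u₄))(y)`, for every `u₁` and every `x ≠ x'`:
`Z_{x,x'}(W^{(2,3)}_{u₁}) ≥ (1/2) · Z(W)^{D_{x,x'}(u₁)}`, where
`D_{x,x'}(u₁) = min_{u₄,v₄} d_H(g(u₁,x,u₄), g(u₁,x',v₄))`. -/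
theorem glued_split_channel_bhattacharyya_lower
    {Y : Type*} [Fintype Y] [Nonempty Y]
    (W : Bool → Y → ℝ) (hWnn : ∀ b y, 0 ≤ W b y)
    (hWsum : ∀ b, ∑ y, W b y = 1)
    (g : Bool → Bool × Bool → Bool → (Fin 4 → Bool)) :
    ∀ (u₁ : Bool) (x x' : Bool × Bool), x ≠ x' →
      ((1 : ℝ) / 2) * (∑ y, Real.sqrt (W false y * W true y)) ^
            (Finset.univ.inf' Finset.univ_nonempty
              (fun p : Bool × Bool => hammingDist (g u₁ x p.1) (g u₁ x' p.2)))
        ≤ ∑ y : Fin 4 → Y,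
            Real.sqrt ((((1 : ℝ) / 2) * ∑ u₄ : Bool, ∏ i, W (g u₁ x u₄ i) (y i)) *
              (((1 : ℝ) / 2) * ∑ v₄ : Bool, ∏ i, W (g u₁ x' v₄ i) (y i))) :=
  glued_split_channel_bhattacharyya_lower_general W hWnn hWsum g
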